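/- Let f : ℂ → ℂ be an entire function with f(0) ≠ 0, and suppose there are constants C ≥ 1, K > 0 and ρ > 0 such that |f(z)| ≤ C·exp(K·|z|^ρ) for all z ∈ ℂ. Then for every R > 0 the set Z_R = {z ∈ ℂ : |z| ≤ R and f(z) = 0} is finite and its cardinality satisfies #Z_R ≤ (log C + K·(2R)^ρ − log |f(0)|) / log 2. -/

import Mathlib

open Complex

/-- If `f` is entire-analytic and `f a = 0`, then `dslope f a` is entire and factors `f`. -/
lemma factor_one (f : ℂ → ℂ) (hf : ∀ z, AnalyticAt ℂ f z) (a : ℂ) (ha : f a = 0) :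
    ∃ g : ℂ → ℂ, (∀ z, AnalyticAt ℂ g z) ∧ ∀ z, f z = (z - a) * g z := by
  refine ⟨dslope f a, ?_, ?_⟩
  · intro z
    rcases eq_or_ne z a with rfl | hz
    · obtain ⟨p, hp⟩ := hf z
      exact (hp.has_fpower_series_dslope_fslope).analyticAt
    · have h1 : AnalyticAt ℂ (fun w => (w - a)⁻¹ • (f w - f a)) z :=
        ((analyticAt_id.sub analyticAt_const).inv (sub_ne_zero.2 hz)).smul
          ((hf z).sub analyticAt_const)
      exact h1.congr (dslope_eventuallyEq_slope_of_ne f hz).symm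
  · intro z
    have := sub_smul_dslope f a z
    rw [ha, sub_zero, smul_eq_mul] at this
    exact this.symm

lemma factor_finset (f : ℂ → ℂ) (hf : ∀ z, AnalyticAt ℂ f z) (s : Finset ℂ)
    (hs : ∀ a ∈ s, f a = 0) :
    ∃ g : ℂ → ℂ, (∀ z, AnalyticAt ℂ g z) ∧ ∀ z, f z = (∏ a ∈ s, (z - a)) * g z := by
  classical
  induction s using Finset.induction_on with
  | empty => exact ⟨f, hf, fun z => by simp⟩
  | @insert a s ha ih =>
      obtain ⟨g, hg, hfg⟩ := ih (fun b hb => hs b (Finset.mem_insert_of_mem hb))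
      have hga : g a = 0 := by
        have := hfg a
        rw [hs a (Finset.mem_insert_self a s)] at this
        have hprod : (∏ b ∈ s, (a - b)) ≠ 0 := by
          rw [Finset.prod_ne_zero_iff]
          intro b hb
          exact sub_ne_zero.2 (fun h => ha (h ▸ hb))
        exact (mul_eq_zero.1 this.symm).resolve_left hprod
      obtain ⟨h, hh, hgh⟩ := factor_one g hg a hga
      refine ⟨h, hh, fun z => ?_⟩
      rw [hfg z, hgh z, Finset.prod_insert ha]
      ring

/-- Key estimate: `n` distinct zeros in the disc of radius `R` force `2^n ‖f 0‖ ≤ C e^{K(2R)^ρ}`. -/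
lemma key_bound (f : ℂ → ℂ) (hf : ∀ z, AnalyticAt ℂ f z) (h0 : f 0 ≠ 0)
    (C K ρ : ℝ) (hC : 1 ≤ C) (hK : 0 < K) (hρ : 0 < ρ)
    (hbound : ∀ z : ℂ, ‖f z‖ ≤ C * Real.exp (K * ‖z‖ ^ ρ))
    (R : ℝ) (hR : 0 < R) (s : Finset ℂ) (hz : ∀ a ∈ s, ‖a‖ ≤ R ∧ f a = 0) :
    (2 : ℝ) ^ s.card * ‖f 0‖ ≤ C * Real.exp (K * (2 * R) ^ ρ) := by
  classical
  obtain ⟨g, hg, hfg⟩ := factor_finset f hf s (fun a ha => (hz a ha).2)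
  set r : ℝ := 2 * R with hr
  have hrpos : 0 < r := by positivity
  -- the "reflected" entire function
  set h : ℂ → ℂ := fun z => g z * ∏ a ∈ s, (((r : ℂ) ^ 2 - (starRingEnd ℂ) a * z) / r) with hdef
  have hh : Differentiable ℂ h := by
    apply Differentiable.mul
    · exact fun z => (hg z).differentiableAt
    · apply Differentiable.fun_finsetProd
      intro a _
      exact (Differentiable.sub (differentiable_const _)
        ((differentiable_const _).mul differentiable_id)).div_const _
  -- on the circle of radius r, ‖h z‖ = ‖f z‖
  have hcirc : ∀ z : ℂ, ‖z‖ = r → ‖h z‖ = ‖f z‖ := by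
    intro z hzr
    have hzz : z * (starRingEnd ℂ) z = (r : ℂ) ^ 2 := by
      rw [Complex.mul_conj, Complex.normSq_eq_norm_sq, hzr]
      push_cast; ring
    have key : ∀ a : ℂ, ‖((r : ℂ) ^ 2 - (starRingEnd ℂ) a * z) / r‖ = ‖z - a‖ := by
      intro a
      have h1 : (r : ℂ) ^ 2 - (starRingEnd ℂ) a * z = z * (starRingEnd ℂ) (z - a) := by
        rw [map_sub, mul_sub, hzz]; ring
      rw [norm_div, h1, norm_mul]
      rw [show ‖(starRingEnd ℂ) (z - a)‖ = ‖z - a‖ by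
        rw [Complex.norm_conj]]
      rw [hzr, show ‖(r : ℂ)‖ = r by simp [abs_of_pos hrpos]]
      rw [mul_comm, mul_div_assoc, div_self (ne_of_gt hrpos), mul_one]
    simp only [hdef]
    rw [norm_mul, norm_prod, Finset.prod_congr rfl (fun a _ => key a),
      hfg z, norm_mul, norm_prod]
    ring
  -- maximum modulus principle on the ball of radius r
  have hmax : ‖h 0‖ ≤ C * Real.exp (K * r ^ ρ) := by
    have hb : Bornology.IsBounded (Metric.ball (0 : ℂ) r) := Metric.isBounded_ball
    have hd : DiffContOnCl ℂ h (Metric.ball (0 : ℂ) r) := hh.diffContOnCl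
    have hfr : ∀ z ∈ frontier (Metric.ball (0 : ℂ) r), ‖h z‖ ≤ C * Real.exp (K * r ^ ρ) := by
      intro z hzf
      rw [frontier_ball _ (ne_of_gt hrpos)] at hzf
      have hzr : ‖z‖ = r := mem_sphere_zero_iff_norm.1 hzf
      rw [hcirc z hzr, ← hzr]
      exact hbound z
    exact Complex.norm_le_of_forall_mem_frontier_norm_le hb hd hfr
      (subset_closure (Metric.mem_ball_self hrpos))
  -- compute h 0 and f 0
  have h0val : ‖h 0‖ = ‖g 0‖ * r ^ s.card := by
    have hr' : ∀ a ∈ s, ‖(((r : ℂ) ^ 2 - (starRingEnd ℂ) a * 0) / r)‖ = r := by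
      intro a _
      rw [mul_zero, sub_zero, norm_div, norm_pow,
        show ‖(r : ℂ)‖ = r by simp [abs_of_pos hrpos],
        pow_two, mul_div_assoc, div_self (ne_of_gt hrpos), mul_one]
    simp only [hdef]
    rw [norm_mul, norm_prod, Finset.prod_congr rfl hr', Finset.prod_const]
  have hf0 : ‖f 0‖ = (∏ a ∈ s, ‖a‖) * ‖g 0‖ := by
    rw [hfg 0, norm_mul, norm_prod]
    congr 1
    exact Finset.prod_congr rfl (fun a _ => by rw [zero_sub, norm_neg])
  -- ∏ ‖a‖ ≤ R ^ n
  have hprodR : (∏ a ∈ s, ‖a‖) ≤ R ^ s.card := by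
    rw [← Finset.prod_const]
    exact Finset.prod_le_prod (fun a _ => norm_nonneg a) (fun a ha => (hz a ha).1)
  have hg0 : 0 ≤ ‖g 0‖ := norm_nonneg _
  calc (2 : ℝ) ^ s.card * ‖f 0‖ = 2 ^ s.card * ((∏ a ∈ s, ‖a‖) * ‖g 0‖) := by rw [hf0]
    _ ≤ 2 ^ s.card * (R ^ s.card * ‖g 0‖) := by
        apply mul_le_mul_of_nonneg_left (mul_le_mul_of_nonneg_right hprodR hg0) (by positivity)
    _ = ‖g 0‖ * r ^ s.card := by rw [hr, mul_pow]; ring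
    _ = ‖h 0‖ := h0val.symm
    _ ≤ C * Real.exp (K * r ^ ρ) := hmax

/-- Jensen-type zero counting estimate: if `f` is entire, `f 0 ≠ 0`, and
`‖f z‖ ≤ C exp (K ‖z‖^ρ)`, then the number of zeros of `f` in the closed disc of radius `R`
is at most `(log C + K (2R)^ρ - log ‖f 0‖) / log 2`. -/
theorem zero_counting_bound
    (f : ℂ → ℂ) (hf : ∀ z, AnalyticAt ℂ f z) (h0 : f 0 ≠ 0)
    (C K ρ : ℝ) (hC : 1 ≤ C) (hK : 0 < K) (hρ : 0 < ρ)
    (hbound : ∀ z : ℂ, ‖f z‖ ≤ C * Real.exp (K * ‖z‖ ^ ρ)) :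
    ∀ R : ℝ, 0 < R →
      {z : ℂ | ‖z‖ ≤ R ∧ f z = 0}.Finite ∧
      ({z : ℂ | ‖z‖ ≤ R ∧ f z = 0}.ncard : ℝ) ≤
        (Real.log C + K * (2 * R) ^ ρ - Real.log ‖f 0‖) / Real.log 2 := by
  intro R hR
  classical
  set B : ℝ := (Real.log C + K * (2 * R) ^ ρ - Real.log ‖f 0‖) / Real.log 2 with hB
  set Z : Set ℂ := {z : ℂ | ‖z‖ ≤ R ∧ f z = 0} with hZ
  have hlog2 : (0 : ℝ) < Real.log 2 := Real.log_pos (by norm_num)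
  have hf0 : (0 : ℝ) < ‖f 0‖ := norm_pos_iff.2 h0
  -- bound for any finite subset of Z
  have hcard : ∀ s : Finset ℂ, ↑s ⊆ Z → (s.card : ℝ) ≤ B := by
    intro s hs
    have hzz : ∀ a ∈ s, ‖a‖ ≤ R ∧ f a = 0 := fun a ha => hs ha
    have key := key_bound f hf h0 C K ρ hC hK hρ hbound R hR s hzz
    have h2n : (0 : ℝ) < 2 ^ s.card := by positivity
    have hlog := Real.log_le_log (by positivity) key
    rw [Real.log_mul (ne_of_gt h2n) (ne_of_gt hf0), Real.log_pow,
      Real.log_mul (by linarith : C ≠ 0) (Real.exp_ne_zero _), Real.log_exp] at hlog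
    rw [hB, le_div_iff₀ hlog2]
    linarith
  -- finiteness
  have hfin : Z.Finite := by
    by_contra hinf
    obtain ⟨t, hts, htfin2, htcard2⟩ :=
      (show Z.Infinite from hinf).exists_subset_ncard_eq (Nat.floor B + 1)
    have htfin : t.Finite := htfin2
    have htcard : t.ncard = Nat.floor B + 1 := htcard2
    have hle := hcard htfin.toFinset (by simpa using hts)
    rw [← Set.ncard_eq_toFinset_card t htfin, htcard] at hle
    have hlt : B < (Nat.floor B + 1 : ℝ) := Nat.lt_floor_add_one B
    push_cast at hle
    linarith
  refine ⟨hfin, ?_⟩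
  have hle := hcard hfin.toFinset (by simp)
  rwa [← Set.ncard_eq_toFinset_card Z hfin] at hle
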